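/- Assume Q > 3 and set k = Q² − 1. Then for all ξ, η ∈ ℝ²: Re A(ξ+iη) + (Q²−1) A(η) = 2(Q−3) p₁² + p₂² + 2(Q−1) p₃² + 2((Q−3)/(Q−1))(Q+1)(Q²+3) p₄², where p₁ = √α ξ₁η₁ − √γ ξ₂η₂, p₂ = √α (ξ₁² − Qη₁²) + √γ (ξ₂² − Qη₂²), p₃ = (αγ)^{1/4}(ξ₁ξ₂ − ((Q+3)/(Q−1)) η₁η₂), p₄ = (αγ)^{1/4} η₁η₂. In particular, since all the coefficients on the right-hand side are nonnegative, Re A(ξ+iη) ≥ −(Q²−1) A(η). -/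

import Mathlib

noncomputable section

/-- `A(η) = α η₁⁴ + 2β η₁²η₂² + γ η₂⁴` for `η ∈ ℝ²`. -/
def Asym (a b c : ℝ) (η : ℝ × ℝ) : ℝ :=
  a * η.1 ^ 4 + 2 * b * η.1 ^ 2 * η.2 ^ 2 + c * η.2 ^ 4

/-- `A(z) = α z₁⁴ + 2β z₁²z₂² + γ z₂⁴` for `z ∈ ℂ²`. -/
def AsymC (a b c : ℝ) (z : ℂ × ℂ) : ℂ :=
  (a : ℂ) * z.1 ^ 4 + 2 * (b : ℂ) * z.1 ^ 2 * z.2 ^ 2 + (c : ℂ) * z.2 ^ 4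

/-- `ξ + iη ∈ ℂ²` for `ξ, η ∈ ℝ²`. -/
def plusI (ξ η : ℝ × ℝ) : ℂ × ℂ :=
  ((ξ.1 : ℂ) + Complex.I * (η.1 : ℂ), (ξ.2 : ℂ) + Complex.I * (η.2 : ℂ))

end

/-! Writing `α = s²`, `γ = t²` and `β = Q s t`, the identity is a polynomial identity in
`s, t, Q, ξ, η` once `(αγ)^{1/4}` is replaced by some `r` with `r² = s t` and `Q - 1` is cleared
from the denominators. Positivity of the coefficients for `Q > 3` then gives the lower bound. -/

lemma re_AsymC_plusI (a b c : ℝ) (ξ η : ℝ × ℝ) :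
    (AsymC a b c (plusI ξ η)).re =
      a * (ξ.1 ^ 4 - 6 * ξ.1 ^ 2 * η.1 ^ 2 + η.1 ^ 4)
      + 2 * b * ((ξ.1 ^ 2 - η.1 ^ 2) * (ξ.2 ^ 2 - η.2 ^ 2) - 4 * ξ.1 * η.1 * ξ.2 * η.2)
      + c * (ξ.2 ^ 4 - 6 * ξ.2 ^ 2 * η.2 ^ 2 + η.2 ^ 4) := by
  simp only [AsymC, plusI, pow_succ, pow_zero, one_mul, Complex.add_re, Complex.mul_re,
    Complex.add_im, Complex.mul_im, Complex.ofReal_re, Complex.ofReal_im, Complex.I_re,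
    Complex.I_im, Complex.re_ofNat, Complex.im_ofNat]
  ring

lemma re_AsymC_plusI_add_eq_sum_sq (s t r Q : ℝ) (hr : r ^ 2 = s * t) (hQ : Q ≠ 1)
    (ξ η : ℝ × ℝ) :
    (AsymC (s ^ 2) (Q * s * t) (t ^ 2) (plusI ξ η)).re
        + (Q ^ 2 - 1) * Asym (s ^ 2) (Q * s * t) (t ^ 2) η =
      2 * (Q - 3) * (s * ξ.1 * η.1 - t * ξ.2 * η.2) ^ 2
      + (s * (ξ.1 ^ 2 - Q * η.1 ^ 2) + t * (ξ.2 ^ 2 - Q * η.2 ^ 2)) ^ 2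
      + 2 * (Q - 1) * (r * (ξ.1 * ξ.2 - (Q + 3) / (Q - 1) * η.1 * η.2)) ^ 2
      + 2 * ((Q - 3) / (Q - 1)) * (Q + 1) * (Q ^ 2 + 3) * (r * η.1 * η.2) ^ 2 := by
  have hQ1 : Q - 1 ≠ 0 := sub_ne_zero.mpr hQ
  rw [re_AsymC_plusI]
  simp only [Asym, mul_pow, hr]
  field_simp
  ring

lemma sum_sq_form_nonneg {Q : ℝ} (hQ : 3 ≤ Q) (x y z w : ℝ) :
    0 ≤ 2 * (Q - 3) * x ^ 2 + y ^ 2 + 2 * (Q - 1) * z ^ 2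
      + 2 * ((Q - 3) / (Q - 1)) * (Q + 1) * (Q ^ 2 + 3) * w ^ 2 := by
  have h3 : 0 ≤ Q - 3 := by linarith
  have h1 : 0 ≤ Q - 1 := by linarith
  positivity

/-- for `Q > 3` and `k = Q² − 1`, the identity
`Re A(ξ+iη) + (Q²−1)A(η) = 2(Q−3)p₁² + p₂² + 2(Q−1)p₃² + 2((Q−3)/(Q−1))(Q+1)(Q²+3)p₄²`
holds; in particular `Re A(ξ+iη) ≥ −(Q²−1)A(η)`. -/
theorem stmt10 (a b c Qv : ℝ) (ha : 0 < a) (hc : 0 < c)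
    (hQ : Qv = b / Real.sqrt (a * c)) (hQ3 : 3 < Qv) :
    (∀ ξ η : ℝ × ℝ,
      (AsymC a b c (plusI ξ η)).re + (Qv ^ 2 - 1) * Asym a b c η =
        2 * (Qv - 3) * (Real.sqrt a * ξ.1 * η.1 - Real.sqrt c * ξ.2 * η.2) ^ 2
        + (Real.sqrt a * (ξ.1 ^ 2 - Qv * η.1 ^ 2)
            + Real.sqrt c * (ξ.2 ^ 2 - Qv * η.2 ^ 2)) ^ 2
        + 2 * (Qv - 1) * ((a * c) ^ ((1 : ℝ) / 4)
            * (ξ.1 * ξ.2 - (Qv + 3) / (Qv - 1) * η.1 * η.2)) ^ 2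
        + 2 * ((Qv - 3) / (Qv - 1)) * (Qv + 1) * (Qv ^ 2 + 3)
            * ((a * c) ^ ((1 : ℝ) / 4) * η.1 * η.2) ^ 2) ∧
    ∀ ξ η : ℝ × ℝ,
      (AsymC a b c (plusI ξ η)).re ≥ -(Qv ^ 2 - 1) * Asym a b c η := by
  have hsa : Real.sqrt a ^ 2 = a := Real.sq_sqrt ha.le
  have hsc : Real.sqrt c ^ 2 = c := Real.sq_sqrt hc.le
  have hb : Qv * Real.sqrt a * Real.sqrt c = b := by
    rw [hQ, mul_assoc, ← Real.sqrt_mul ha.le]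
    exact div_mul_cancel₀ b (Real.sqrt_pos.mpr (mul_pos ha hc)).ne'
  have hr : ((a * c) ^ ((1 : ℝ) / 4)) ^ 2 = Real.sqrt a * Real.sqrt c := by
    rw [← Real.rpow_mul_natCast (mul_pos ha hc).le, ← Real.sqrt_mul ha.le, Real.sqrt_eq_rpow]
    norm_num
  have key (ξ η : ℝ × ℝ) := by
    have h := re_AsymC_plusI_add_eq_sum_sq _ _ _ Qv hr (by linarith) ξ η
    rwa [hsa, hsc, hb] at h
  refine ⟨key, fun ξ η => ?_⟩
  have hnonneg := sum_sq_form_nonneg hQ3.le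
    (Real.sqrt a * ξ.1 * η.1 - Real.sqrt c * ξ.2 * η.2)
    (Real.sqrt a * (ξ.1 ^ 2 - Qv * η.1 ^ 2) + Real.sqrt c * (ξ.2 ^ 2 - Qv * η.2 ^ 2))
    ((a * c) ^ ((1 : ℝ) / 4) * (ξ.1 * ξ.2 - (Qv + 3) / (Qv - 1) * η.1 * η.2))
    ((a * c) ^ ((1 : ℝ) / 4) * η.1 * η.2)
  linarith [key ξ η, hnonneg]
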